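/- Let π be a half-circle with center O and radius r > 0, and let p_1, …, p_N (N ≥ 3) be distinct points on π ordered along the arc. Then for every j ∈ {2, …, N−1} there exists a closed disk whose center lies on the open segment from p_j to O and which is contained in the interior of triangle p_{j−1} p_j p_{j+1} and in the interior of triangle p_1 p_j p_N. -/

import Mathlib

open Set Metric Bornology
open scoped RealInnerProductSpace

noncomputable section

/-- The Euclidean plane. -/
abbrev E2 : Type := EuclideanSpace ℝ (Fin 2)

/-- The point of the circle with center `O` and radius `r` at angle `θ`. -/
def circPt (O : E2) (r θ : ℝ) : E2 :=
  O + r • (WithLp.equiv 2 (Fin 2 → ℝ)).symm ![Real.cos θ, Real.sin θ]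

/-- The 2D cross product (signed area form) of two vectors of the plane. -/
def cross2 (u v : E2) : ℝ := u 0 * v 1 - u 1 * v 0

/-!
Write `P θ` for the point of the circle at angle `θ` and take angles `α < β < γ` with
`γ - α ≤ π`. With `S = sin (β - α) + sin (γ - β) - sin (γ - α)` one has the identity
`S • (O - P β) = sin (γ - β) • (P α - P β) + sin (β - α) • (P γ - P β)`, and `S > 0` because
`sin` is strictly subadditive on `(0, π)`. So the direction from the apex `P β` towards the
centre lies strictly inside the angle of the triangle at `P β`, and the points of the segment
from `P β` to `O` close enough to `P β` lie in the interior of the triangle. Applied to the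
triangles `p (j-1) p j p (j+1)` and `p 1 p j p N`, this gives one point of the open segment
interior to both, and a small closed disk around it.
-/

open Filter Topology Module Real

theorem Real.sin_add_lt_sin_add_sin {x y : ℝ} (hx₀ : 0 < x) (hxπ : x < π) (hy₀ : 0 < y)
    (hyπ : y < π) : sin (x + y) < sin x + sin y := by
  have hcx : cos x < 1 := by simpa using cos_lt_cos_of_nonneg_of_le_pi le_rfl hxπ.le hx₀
  have hcy : cos y < 1 := by simpa using cos_lt_cos_of_nonneg_of_le_pi le_rfl hyπ.le hy₀
  have hsx := sin_pos_of_pos_of_lt_pi hx₀ hxπ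
  have hsy := sin_pos_of_pos_of_lt_pi hy₀ hyπ
  rw [sin_add]
  nlinarith [mul_lt_mul_of_pos_left hcy hsx, mul_lt_mul_of_pos_left hcx hsy]

section Simplex

variable {V : Type*} [NormedAddCommGroup V] [NormedSpace ℝ V] [FiniteDimensional ℝ V]

theorem AffineIndependent.sum_smul_mem_interior_convexHull {ι : Type*} [Fintype ι]
    {v : ι → V} (hv : AffineIndependent ℝ v) (hcard : Fintype.card ι = finrank ℝ V + 1)
    {w : ι → ℝ} (hw : ∀ i, 0 < w i) (hw₁ : ∑ i, w i = 1) :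
    ∑ i, w i • v i ∈ interior (convexHull ℝ (range v)) := by
  let b : AffineBasis ι ℝ V :=
    ⟨v, hv, (hv.affineSpan_eq_top_iff_card_eq_finrank_add_one).2 hcard⟩
  have hcomb : ∑ i, w i • v i = Finset.univ.affineCombination ℝ v w := by
    rw [Finset.affineCombination_eq_linear_combination _ _ _ hw₁]
  change _ ∈ interior (convexHull ℝ (range b))
  rw [b.interior_convexHull, hcomb]
  intro i
  rw [show Finset.univ.affineCombination ℝ v w = Finset.univ.affineCombination ℝ b w from rfl,
    b.coord_apply_combination_of_mem (Finset.mem_univ i) hw₁]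
  exact hw i

theorem add_smul_sub_add_smul_sub_mem_interior_convexHull (hV : finrank ℝ V = 2) {a b c : V}
    (habc : ¬ Collinear ℝ {a, b, c}) {s u : ℝ} (hs : 0 < s) (hu : 0 < u) (hsu : s + u < 1) :
    a + s • (b - a) + u • (c - a) ∈ interior (convexHull ℝ {a, b, c}) := by
  have hv : AffineIndependent ℝ ![a, b, c] := affineIndependent_iff_not_collinear_set.2 habc
  have hw : ∀ i, 0 < ![1 - s - u, s, u] i := by
    intro i
    fin_cases i <;>
      simp only [Fin.zero_eta, Fin.mk_one, Fin.reduceFinMk, Matrix.cons_val] <;> linarith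
  have hmem := hv.sum_smul_mem_interior_convexHull (by simp [hV]) hw
    (by simp only [Fin.sum_univ_three, Matrix.cons_val]; ring)
  have hsum : ∑ i, ![1 - s - u, s, u] i • ![a, b, c] i = a + s • (b - a) + u • (c - a) := by
    simp only [Fin.sum_univ_three, Matrix.cons_val_zero, Matrix.cons_val_one,
      Matrix.cons_val_two, Matrix.head_cons, Matrix.tail_cons]
    module
  rwa [hsum, Matrix.range_cons, Matrix.range_cons_cons_empty, singleton_union] at hmem

theorem eventually_lineMap_mem_interior_convexHull (hV : finrank ℝ V = 2) {a b c x : V}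
    (habc : ¬ Collinear ℝ {a, b, c}) {s u : ℝ} (hs : 0 < s) (hu : 0 < u)
    (hx : x - a = s • (b - a) + u • (c - a)) :
    ∀ᶠ t in 𝓝[>] (0 : ℝ), AffineMap.lineMap a x t ∈ interior (convexHull ℝ {a, b, c}) := by
  filter_upwards [Ioo_mem_nhdsGT (show (0 : ℝ) < 1 / (s + u) by positivity)] with t ht
  have hts : t * (s + u) < 1 := by
    rw [← lt_div_iff₀ (by positivity)]; exact ht.2
  convert add_smul_sub_add_smul_sub_mem_interior_convexHull hV habc (mul_pos ht.1 hs)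
    (mul_pos ht.1 hu) (by linarith) using 1
  rw [AffineMap.lineMap_apply, vsub_eq_sub, vadd_eq_add, hx]
  module

end Simplex

theorem not_collinear_of_cross2_ne_zero {a b c : E2} (h : cross2 (b - a) (c - a) ≠ 0) :
    ¬ Collinear ℝ {a, b, c} := by
  rw [collinear_iff_of_mem (mem_insert a _)]
  rintro ⟨v, hv⟩
  obtain ⟨tb, rfl⟩ := hv b (by simp)
  obtain ⟨tc, rfl⟩ := hv c (by simp)
  apply h
  simp only [cross2, vadd_eq_add, add_sub_cancel_right, PiLp.smul_apply, smul_eq_mul]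
  ring

section Circle

variable (O : E2) (r : ℝ)

@[simp]
theorem circPt_apply_zero (θ : ℝ) : circPt O r θ 0 = O 0 + r * cos θ := by
  simp [circPt]

@[simp]
theorem circPt_apply_one (θ : ℝ) : circPt O r θ 1 = O 1 + r * sin θ := by
  simp [circPt]

theorem cross2_circPt_sub (α β γ : ℝ) :
    cross2 (circPt O r α - circPt O r β) (circPt O r γ - circPt O r β) =
      -r ^ 2 * (sin (β - α) + sin (γ - β) - sin (γ - α)) := by
  simp only [cross2, PiLp.sub_apply, circPt_apply_zero, circPt_apply_one, sin_sub]
  ring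

theorem smul_sub_circPt (α β γ : ℝ) :
    (sin (β - α) + sin (γ - β) - sin (γ - α)) • (O - circPt O r β) =
      sin (γ - β) • (circPt O r α - circPt O r β) +
        sin (β - α) • (circPt O r γ - circPt O r β) := by
  ext i
  fin_cases i <;>
    simp only [Fin.zero_eta, Fin.mk_one, PiLp.add_apply, PiLp.smul_apply, PiLp.sub_apply,
      smul_eq_mul, circPt_apply_zero, circPt_apply_one, sin_sub] <;>
    ring

theorem eventually_lineMap_circPt_mem_interior_convexHull {r : ℝ} (hr : r ≠ 0) {α β γ : ℝ}
    (hαβ : α < β) (hβγ : β < γ) (hγα : γ - α ≤ π) :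
    ∀ᶠ t in 𝓝[>] (0 : ℝ), AffineMap.lineMap (circPt O r β) O t ∈
      interior (convexHull ℝ {circPt O r α, circPt O r β, circPt O r γ}) := by
  set S := sin (β - α) + sin (γ - β) - sin (γ - α)
  have hsβα : 0 < sin (β - α) := sin_pos_of_pos_of_lt_pi (by linarith) (by linarith)
  have hsγβ : 0 < sin (γ - β) := sin_pos_of_pos_of_lt_pi (by linarith) (by linarith)
  have hS : 0 < S := by
    have := sin_add_lt_sin_add_sin (x := β - α) (y := γ - β) (by linarith) (by linarith)
      (by linarith) (by linarith)
    rw [sub_add_sub_cancel'] at this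
    linarith
  have hcol : ¬ Collinear ℝ {circPt O r β, circPt O r α, circPt O r γ} := by
    apply not_collinear_of_cross2_ne_zero
    rw [cross2_circPt_sub]
    exact mul_ne_zero (neg_ne_zero.2 (pow_ne_zero 2 hr)) hS.ne'
  rw [insert_comm]
  refine eventually_lineMap_mem_interior_convexHull finrank_euclideanSpace_fin hcol
    (div_pos hsγβ hS) (div_pos hsβα hS) ?_
  rw [div_eq_inv_mul, mul_smul, div_eq_inv_mul, mul_smul, ← smul_add, ← smul_sub_circPt,
    inv_smul_smul₀ hS.ne']

end Circle

theorem eventually_lineMap_mem_interior_convexHull_of_arc {O : E2} {r : ℝ} (hr : r ≠ 0)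
    {θ₀ : ℝ} {N : ℕ} {θ : ℕ → ℝ} {p : ℕ → E2}
    (hmono : StrictMonoOn θ (Icc 1 N) ∨ StrictAntiOn θ (Icc 1 N))
    (hθ : ∀ i ∈ Icc 1 N, θ i ∈ Icc θ₀ (θ₀ + π))
    (hp : ∀ i ∈ Icc 1 N, p i = circPt O r (θ i))
    {i j k : ℕ} (hi : i ∈ Icc 1 N) (hk : k ∈ Icc 1 N) (hij : i < j) (hjk : j < k) :
    ∀ᶠ t in 𝓝[>] (0 : ℝ), AffineMap.lineMap (p j) O t ∈
      interior (convexHull ℝ {p i, p j, p k}) := by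
  have hj : j ∈ Icc 1 N := ⟨hi.1.trans hij.le, hjk.le.trans hk.2⟩
  have hθi := hθ i hi
  have hθk := hθ k hk
  rw [hp i hi, hp j hj, hp k hk]
  rcases hmono with hmono | hanti
  · exact eventually_lineMap_circPt_mem_interior_convexHull O hr (hmono hi hj hij)
      (hmono hj hk hjk) (by linarith [hθi.1, hθk.2])
  · have := eventually_lineMap_circPt_mem_interior_convexHull O hr (hanti hj hk hjk)
      (hanti hi hj hij) (by linarith [hθi.2, hθk.1])
    rwa [insert_comm, pair_comm, insert_comm] at this

theorem exists_disk_in_triangles_general (O : E2) (r : ℝ) (hr : 0 < r) (θ₀ : ℝ)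
    (N : ℕ) (θ : ℕ → ℝ) (p : ℕ → E2)
    (hmono : StrictMonoOn θ (Set.Icc 1 N) ∨ StrictAntiOn θ (Set.Icc 1 N))
    (hθ : ∀ i ∈ Set.Icc 1 N, θ i ∈ Set.Icc θ₀ (θ₀ + Real.pi))
    (hp : ∀ i ∈ Set.Icc 1 N, p i = circPt O r (θ i)) :
    ∀ j : ℕ, 2 ≤ j → j ≤ N - 1 →
      ∃ (c : E2) (ρ : ℝ), 0 < ρ ∧
        c ∈ openSegment ℝ (p j) O ∧
        Metric.closedBall c ρ ⊆
          interior (convexHull ℝ {p (j - 1), p j, p (j + 1)}) ∧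
        Metric.closedBall c ρ ⊆
          interior (convexHull ℝ {p 1, p j, p N}) := by
  intro j hj2 hjN
  have hlocal := eventually_lineMap_mem_interior_convexHull_of_arc hr.ne' hmono hθ hp
    (i := j - 1) (j := j) (k := j + 1) ⟨by omega, by omega⟩ ⟨by omega, by omega⟩ (by omega)
    (by omega)
  have hglobal := eventually_lineMap_mem_interior_convexHull_of_arc hr.ne' hmono hθ hp
    (i := 1) (j := j) (k := N) ⟨le_rfl, by omega⟩ ⟨by omega, le_rfl⟩ (by omega) (by omega)
  obtain ⟨t, hct_local, hct_global, ht⟩ :=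
    (hlocal.and (hglobal.and (Ioo_mem_nhdsGT one_pos))).exists
  obtain ⟨ρ, hρ, hball⟩ := nhds_basis_closedBall.mem_iff.1
    ((isOpen_interior.inter isOpen_interior).mem_nhds ⟨hct_local, hct_global⟩)
  exact ⟨_, ρ, hρ, openSegment_eq_image_lineMap ℝ (p j) O ▸ ⟨t, ht, rfl⟩,
    fun x hx => (hball hx).1, fun x hx => (hball hx).2⟩

/-- Given distinct points `p 1, …, p N` ordered along a half-circle with center `O`,
for every interior index `j` there is a closed disk of positive radius centered on the
open segment from `p j` to `O`, contained in the interior of the triangle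
`p (j-1) p j p (j+1)` and in the interior of the triangle `p 1 p j p N`. -/
theorem exists_disk_in_triangles (O : E2) (r : ℝ) (hr : 0 < r) (θ₀ : ℝ)
    (N : ℕ) (hN : 3 ≤ N) (θ : ℕ → ℝ) (p : ℕ → E2)
    (hmono : StrictMonoOn θ (Set.Icc 1 N) ∨ StrictAntiOn θ (Set.Icc 1 N))
    (hθ : ∀ i ∈ Set.Icc 1 N, θ i ∈ Set.Icc θ₀ (θ₀ + Real.pi))
    (hp : ∀ i ∈ Set.Icc 1 N, p i = circPt O r (θ i)) :
    ∀ j : ℕ, 2 ≤ j → j ≤ N - 1 →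
      ∃ (c : E2) (ρ : ℝ), 0 < ρ ∧
        c ∈ openSegment ℝ (p j) O ∧
        Metric.closedBall c ρ ⊆
          interior (convexHull ℝ {p (j - 1), p j, p (j + 1)}) ∧
        Metric.closedBall c ρ ⊆
          interior (convexHull ℝ {p 1, p j, p N}) :=
  exists_disk_in_triangles_general O r hr θ₀ N θ p hmono hθ hp

end
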